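/- arXiv:2404.07910 — 6 statements merged into one kernel-verified Lean document; each statement's English description precedes it below -/
import Mathlib

section
/- Let k be a field of characteristic zero and let a ∈ k with a ≠ 0. There is a k-algebra isomorphism k[X,Y]/(X·(X·Y−1) − a) ≅ k[T,T⁻¹], where k[T,T⁻¹] is the Laurent polynomial ring in one variable over k. (Equivalently, every fiber of Broughton's map f(x,y)=x(xy−1) over a nonzero value a is isomorphic to the multiplicative group 𝔾_{m,k}.) -/
/-!
In the fiber ring the relation `x (x y - 1) = a` exhibits `x` as a unit with inverse
`a⁻¹ (x y - 1)`, and it can be rewritten as `x² y = x + a`, so `y = (x + a) x⁻²`.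
Hence `T ↦ x` and `x ↦ T`, `y ↦ (T + a) T⁻²` are mutually inverse algebra maps between the
Laurent polynomials and the fiber ring; each composite is the identity because it fixes generators.
-/

open MvPolynomial

namespace LaurentPolynomial

open scoped LaurentPolynomial

variable {R A : Type*} [CommSemiring R] [Semiring A] [Algebra R A]

noncomputable def aevalUnit (u : Aˣ) : R[T;T⁻¹] →ₐ[R] A :=
  AddMonoidAlgebra.lift R A ℤ ((Units.coeHom A).comp (zpowersHom Aˣ u))

@[simp]
theorem aevalUnit_T (u : Aˣ) (n : ℤ) : aevalUnit u (T n : R[T;T⁻¹]) = ↑(u ^ n) := by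
  rw [T, aevalUnit, AddMonoidAlgebra.lift_single, one_smul]
  rfl

@[simp]
theorem aevalUnit_C (u : Aˣ) (r : R) : aevalUnit u (C r) = algebraMap R A r := by
  rw [C_eq_algebraMap, AlgHom.commutes]

theorem algHom_ext {f g : R[T;T⁻¹] →ₐ[R] A} (h : f (T 1) = g (T 1)) : f = g :=
  (AddMonoidAlgebra.lift R A ℤ).symm.injective (MonoidHom.ext_mint h)

end LaurentPolynomial

abbrev BroughtonFiber {R : Type*} [CommRing R] (a : R) : Type _ :=
  MvPolynomial (Fin 2) R ⧸ Ideal.span {(X 0 * (X 0 * X 1 - 1) - C a : MvPolynomial (Fin 2) R)}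

namespace BroughtonFiber

open LaurentPolynomial (T aevalUnit)
open scoped LaurentPolynomial

variable {R A : Type*} [CommRing R] [CommRing A] [Algebra R A] {a : R}

variable (a) in
noncomputable def x : BroughtonFiber a := Ideal.Quotient.mk _ (X 0)

variable (a) in
noncomputable def y : BroughtonFiber a := Ideal.Quotient.mk _ (X 1)

theorem x_mul_x_mul_y_sub_one : x a * (x a * y a - 1) = algebraMap R _ a := by
  have h : (Ideal.Quotient.mk _ (X 0 * (X 0 * X 1 - 1) - C a) : BroughtonFiber a) = 0 :=
    Ideal.Quotient.eq_zero_iff_mem.2 (Ideal.mem_span_singleton_self _)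
  rwa [map_sub, ← MvPolynomial.algebraMap_eq, Ideal.Quotient.mk_algebraMap, sub_eq_zero] at h

theorem x_sq_mul_y : x a ^ 2 * y a = x a + algebraMap R _ a := by
  linear_combination (x_mul_x_mul_y_sub_one (a := a))

theorem isUnit_x (ha : IsUnit a) : IsUnit (x a) :=
  isUnit_of_mul_isUnit_left <| x_mul_x_mul_y_sub_one (a := a) ▸ ha.map (algebraMap R _)

noncomputable def lift (p q : A) (h : p * (p * q - 1) = algebraMap R A a) :
    BroughtonFiber a →ₐ[R] A :=
  Ideal.Quotient.liftₐ _ (aeval ![p, q]) fun f hf => by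
    obtain ⟨c, rfl⟩ := Ideal.mem_span_singleton'.1 hf
    simp [h]

@[simp]
theorem lift_x (p q : A) (h : p * (p * q - 1) = algebraMap R A a) : lift p q h (x a) = p :=
  aeval_X ![p, q] 0

@[simp]
theorem lift_y (p q : A) (h : p * (p * q - 1) = algebraMap R A a) : lift p q h (y a) = q :=
  aeval_X ![p, q] 1

theorem algHom_ext {f g : BroughtonFiber a →ₐ[R] A} (hx : f (x a) = g (x a))
    (hy : f (y a) = g (y a)) : f = g :=
  Ideal.Quotient.algHom_ext R <| MvPolynomial.algHom_ext fun i => by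
    fin_cases i
    exacts [hx, hy]

theorem T_mul_T_mul_sub_one :
    (T 1 : R[T;T⁻¹]) * (T 1 * ((T 1 + LaurentPolynomial.C a) * T (-2)) - 1) =
      algebraMap R _ a := by
  have h : (T 1 : R[T;T⁻¹]) * T 1 * T (-2) = 1 := by
    rw [← LaurentPolynomial.T_add, ← LaurentPolynomial.T_add]
    norm_num
  rw [← LaurentPolynomial.C_eq_algebraMap]
  linear_combination (T 1 + LaurentPolynomial.C a) * h

variable (a) in
noncomputable def toLaurentPolynomial : BroughtonFiber a →ₐ[R] R[T;T⁻¹] :=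
  lift (T 1) ((T 1 + LaurentPolynomial.C a) * T (-2)) T_mul_T_mul_sub_one

noncomputable def ofLaurentPolynomial (ha : IsUnit a) : R[T;T⁻¹] →ₐ[R] BroughtonFiber a :=
  aevalUnit (isUnit_x ha).unit

theorem ofLaurentPolynomial_toLaurentPolynomial_y (ha : IsUnit a) :
    ofLaurentPolynomial ha (toLaurentPolynomial a (y a)) = y a := by
  set u := (isUnit_x ha).unit
  have hu : (u : BroughtonFiber a) = x a := (isUnit_x ha).unit_spec
  simp only [ofLaurentPolynomial, toLaurentPolynomial, lift_y, map_mul, map_add,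
    LaurentPolynomial.aevalUnit_T, LaurentPolynomial.aevalUnit_C, zpow_neg, zpow_ofNat, pow_one]
  rw [Units.mul_inv_eq_iff_eq_mul, Units.val_pow_eq_pow_val, hu]
  linear_combination (x_sq_mul_y (a := a)).symm

noncomputable def equivLaurentPolynomial (ha : IsUnit a) : BroughtonFiber a ≃ₐ[R] R[T;T⁻¹] :=
  AlgEquiv.ofAlgHom (toLaurentPolynomial a) (ofLaurentPolynomial ha)
    (LaurentPolynomial.algHom_ext (by simp [toLaurentPolynomial, ofLaurentPolynomial]))
    (algHom_ext (by simp [toLaurentPolynomial, ofLaurentPolynomial])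
      (ofLaurentPolynomial_toLaurentPolynomial_y ha))

end BroughtonFiber

theorem stmt_1_general (k : Type) [Field k] (a : k) (ha : a ≠ 0) :
    Nonempty ((MvPolynomial (Fin 2) k ⧸
        Ideal.span {(X 0 * (X 0 * X 1 - 1) - C a : MvPolynomial (Fin 2) k)}) ≃ₐ[k]
      LaurentPolynomial k) :=
  ⟨BroughtonFiber.equivLaurentPolynomial ha.isUnit⟩

/-- Every fiber of Broughton's map `f(x,y) = x(xy−1)` over a nonzero value `a` is isomorphic
to the multiplicative group: as `k`-algebras, `k[X,Y]/(X·(X·Y−1) − a) ≅ k[T,T⁻¹]`. -/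
theorem stmt_1 (k : Type) [Field k] [CharZero k] (a : k) (ha : a ≠ 0) :
    Nonempty ((MvPolynomial (Fin 2) k ⧸
        Ideal.span {(X 0 * (X 0 * X 1 - 1) - C a : MvPolynomial (Fin 2) k)}) ≃ₐ[k]
      LaurentPolynomial k) :=
  stmt_1_general k a ha
end

section
/- Let k be a field of characteristic zero and set f = X·(X·Y−1) ∈ k[X,Y]. There is a k-algebra isomorphism φ from the localization k[X,Y][1/f] onto the Laurent polynomial ring in two variables over k (the monoid algebra of ℤ × ℤ over k) such that φ sends the image of X to the first standard Laurent generator and the image of f to the second standard Laurent generator. (Equivalently, the generic fiber of Broughton's map is isomorphic to 𝔾_{m,k} × 𝔾_{m,k}.) -/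
/-!
In `k[X,Y][1/f]` with `f = X(XY - 1)` the element `X` divides `f`, hence is a unit, and
`Y = (f + X) X⁻²`. So `X ↦ x`, `Y ↦ (v + x) x⁻²` maps `k[X,Y]` to the Laurent ring
`k[x^±, v^±]` and sends `f` to the unit `v`, hence extends to the localization; conversely
`x ↦ X`, `v ↦ f` extends to the Laurent ring. Both composites fix generators (by the identities
`x(x(v + x)x⁻² - 1) = v` and `(X(XY - 1) + X)X⁻² = Y`), so they are inverse isomorphisms.
-/

open MvPolynomial AddMonoidAlgebra

noncomputable section

theorem ofAdd_eq_zpow_mul_zpow (q : ℤ × ℤ) :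
    Multiplicative.ofAdd q =
      Multiplicative.ofAdd ((1 : ℤ), (0 : ℤ)) ^ q.1 *
        Multiplicative.ofAdd ((0 : ℤ), (1 : ℤ)) ^ q.2 := by
  apply Multiplicative.toAdd.injective
  simp

namespace AddMonoidAlgebra

variable {k A : Type*} [CommSemiring k] [CommSemiring A] [Algebra k A]

theorem algHom_ext_intProd ⦃φ ψ : AddMonoidAlgebra k (ℤ × ℤ) →ₐ[k] A⦄
    (h₁ : φ (single (1, 0) 1) = ψ (single (1, 0) 1))
    (h₂ : φ (single (0, 1) 1) = ψ (single (0, 1) 1)) : φ = ψ := by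
  refine algHom_ext (fun q => ?_) (Subsingleton.elim _ _)
  let units (χ : AddMonoidAlgebra k (ℤ × ℤ) →ₐ[k] A) :=
    (χ.toMonoidHom.comp (of k (ℤ × ℤ))).toHomUnits
  have eval_single (χ) : χ (single q 1) = ((units χ (.ofAdd ((1 : ℤ), (0 : ℤ))) ^ q.1 *
      units χ (.ofAdd ((0 : ℤ), (1 : ℤ))) ^ q.2 : Aˣ) : A) := by
    rw [← map_zpow (units χ), ← map_zpow (units χ), ← map_mul, ← ofAdd_eq_zpow_mul_zpow]
    rfl
  have hx : units φ (.ofAdd ((1 : ℤ), (0 : ℤ))) = units ψ (.ofAdd (1, 0)) := Units.ext h₁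
  have hy : units φ (.ofAdd ((0 : ℤ), (1 : ℤ))) = units ψ (.ofAdd (0, 1)) := Units.ext h₂
  rw [eval_single φ, eval_single ψ, hx, hy]

def liftIntProd (u v : Aˣ) : AddMonoidAlgebra k (ℤ × ℤ) →ₐ[k] A :=
  lift k A (ℤ × ℤ) ((Units.coeHom A).comp
    (((zpowersHom Aˣ u).coprod (zpowersHom Aˣ v)).comp
      (MulEquiv.prodMultiplicative (G := ℤ) (H := ℤ)).toMonoidHom))

@[simp]
theorem liftIntProd_single (u v : Aˣ) (q : ℤ × ℤ) :
    liftIntProd (k := k) u v (single q 1) = ((u ^ q.1 * v ^ q.2 : Aˣ) : A) := by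
  simp [liftIntProd]

theorem single_mul_single_mul_single_neg_two :
    (single (1, 0) 1 * single (1, 0) 1 * single (-2, 0) 1 : AddMonoidAlgebra k (ℤ × ℤ)) =
      1 := by
  simp [single_mul_single, AddMonoidAlgebra.one_def, Prod.mk_zero_zero]

end AddMonoidAlgebra

theorem mul_mul_sub_one_eq_of_mul_mul_eq_one {R : Type*} [CommRing R] {x w : R}
    (hw : x * x * w = 1) (v : R) : x * (x * ((v + x) * w) - 1) = v := by
  linear_combination (v + x) * hw

theorem mul_mul_sub_one_add_mul_eq_of_mul_mul_eq_one {R : Type*} [CommRing R] {x w : R}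
    (hw : x * x * w = 1) (y : R) : (x * (x * y - 1) + x) * w = y := by
  linear_combination y * hw

namespace Broughton

variable (k : Type*) [CommRing k]

abbrev poly : MvPolynomial (Fin 2) k := X 0 * (X 0 * X 1 - 1)

abbrev GenericFiber := Localization.Away (poly k)

def toLaurent : MvPolynomial (Fin 2) k →ₐ[k] AddMonoidAlgebra k (ℤ × ℤ) :=
  aeval ![single (1, 0) 1, (single (0, 1) 1 + single (1, 0) 1) * single (-2, 0) 1]

theorem toLaurent_X_zero : toLaurent k (X 0) = single (1, 0) 1 := by
  simp [toLaurent]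

theorem toLaurent_poly : toLaurent k (poly k) = single (0, 1) 1 := by
  simpa [toLaurent] using
    mul_mul_sub_one_eq_of_mul_mul_eq_one (single_mul_single_mul_single_neg_two (k := k)) _

theorem isUnit_toLaurent_poly : IsUnit (toLaurent k (poly k)) := by
  rw [toLaurent_poly]
  exact ((of k (ℤ × ℤ)).toHomUnits (.ofAdd (0, 1))).isUnit

def fiberToLaurent : GenericFiber k →ₐ[k] AddMonoidAlgebra k (ℤ × ℤ) :=
  IsLocalization.Away.liftAlgHom (poly k) (isUnit_toLaurent_poly k)

theorem fiberToLaurent_algebraMap (r : MvPolynomial (Fin 2) k) :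
    fiberToLaurent k (algebraMap _ (GenericFiber k) r) = toLaurent k r :=
  IsLocalization.Away.lift_eq _ (isUnit_toLaurent_poly k) r

def unitX : (GenericFiber k)ˣ :=
  (IsLocalization.Away.isUnit_of_dvd (poly k) (dvd_mul_right _ _)).unit

def unitPoly : (GenericFiber k)ˣ :=
  (IsLocalization.Away.algebraMap_isUnit (poly k)).unit

def laurentToFiber : AddMonoidAlgebra k (ℤ × ℤ) →ₐ[k] GenericFiber k :=
  liftIntProd (unitX k) (unitPoly k)

theorem laurentToFiber_single_one_zero :
    laurentToFiber k (single (1, 0) 1) =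
      algebraMap (MvPolynomial (Fin 2) k) (GenericFiber k) (X 0) := by
  simp [laurentToFiber, unitX]

theorem laurentToFiber_single_zero_one :
    laurentToFiber k (single (0, 1) 1) =
      algebraMap (MvPolynomial (Fin 2) k) (GenericFiber k) (poly k) := by
  simp [laurentToFiber, unitPoly]

theorem fiberToLaurent_comp_laurentToFiber :
    (fiberToLaurent k).comp (laurentToFiber k) = AlgHom.id k _ := by
  refine algHom_ext_intProd ?_ ?_
  · simp [laurentToFiber_single_one_zero, fiberToLaurent_algebraMap, toLaurent_X_zero]
  · rw [AlgHom.comp_apply, laurentToFiber_single_zero_one, fiberToLaurent_algebraMap,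
      toLaurent_poly, AlgHom.id_apply]

theorem laurentToFiber_comp_fiberToLaurent :
    (laurentToFiber k).comp (fiberToLaurent k) = AlgHom.id k _ := by
  refine IsLocalization.algHom_ext (Submonoid.powers (poly k)) <|
    MvPolynomial.algHom_ext fun i => ?_
  have hw := congr(laurentToFiber k $(single_mul_single_mul_single_neg_two (k := k)))
  simp only [map_mul, map_one, laurentToFiber_single_one_zero] at hw
  change laurentToFiber k (fiberToLaurent k (algebraMap _ (GenericFiber k) (X i))) =
    algebraMap _ _ (X i)
  rw [fiberToLaurent_algebraMap]
  fin_cases i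
  · simp [toLaurent_X_zero, laurentToFiber_single_one_zero]
  · simpa [toLaurent, laurentToFiber_single_one_zero, laurentToFiber_single_zero_one] using
      mul_mul_sub_one_add_mul_eq_of_mul_mul_eq_one hw _

def genericFiberEquiv : GenericFiber k ≃ₐ[k] AddMonoidAlgebra k (ℤ × ℤ) :=
  .ofAlgHom (fiberToLaurent k) (laurentToFiber k) (fiberToLaurent_comp_laurentToFiber k)
    (laurentToFiber_comp_fiberToLaurent k)

end Broughton

end

theorem stmt_2_general (k : Type) [Field k] :
    ∃ φ : Localization.Away (X 0 * (X 0 * X 1 - 1) : MvPolynomial (Fin 2) k) ≃ₐ[k]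
        AddMonoidAlgebra k (ℤ × ℤ),
      φ (algebraMap (MvPolynomial (Fin 2) k)
          (Localization.Away (X 0 * (X 0 * X 1 - 1) : MvPolynomial (Fin 2) k)) (X 0)) =
        AddMonoidAlgebra.single ((1 : ℤ), (0 : ℤ)) 1 ∧
      φ (algebraMap (MvPolynomial (Fin 2) k)
          (Localization.Away (X 0 * (X 0 * X 1 - 1) : MvPolynomial (Fin 2) k))
          (X 0 * (X 0 * X 1 - 1))) =
        AddMonoidAlgebra.single ((0 : ℤ), (1 : ℤ)) 1 :=
  ⟨Broughton.genericFiberEquiv k,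
    (Broughton.fiberToLaurent_algebraMap k _).trans (Broughton.toLaurent_X_zero k),
    (Broughton.fiberToLaurent_algebraMap k _).trans (Broughton.toLaurent_poly k)⟩

/-- The generic fiber of Broughton's map is a two-dimensional torus: there is a `k`-algebra
isomorphism `k[X,Y][1/f] ≅ k[ℤ × ℤ]` (Laurent polynomials in two variables) sending the image
of `X` to the first standard Laurent generator and the image of `f = X(XY−1)` to the second. -/
theorem stmt_2 (k : Type) [Field k] [CharZero k] :
    ∃ φ : Localization.Away (X 0 * (X 0 * X 1 - 1) : MvPolynomial (Fin 2) k) ≃ₐ[k]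
        AddMonoidAlgebra k (ℤ × ℤ),
      φ (algebraMap (MvPolynomial (Fin 2) k)
          (Localization.Away (X 0 * (X 0 * X 1 - 1) : MvPolynomial (Fin 2) k)) (X 0)) =
        AddMonoidAlgebra.single ((1 : ℤ), (0 : ℤ)) 1 ∧
      φ (algebraMap (MvPolynomial (Fin 2) k)
          (Localization.Away (X 0 * (X 0 * X 1 - 1) : MvPolynomial (Fin 2) k))
          (X 0 * (X 0 * X 1 - 1))) =
        AddMonoidAlgebra.single ((0 : ℤ), (1 : ℤ)) 1 :=
  stmt_2_general k
end

section
/- Let k be a field of characteristic zero and set f = X·(X·Y−1) ∈ k[X,Y]. There is a k-algebra isomorphism ψ from the localization k[X,Y][1/f] onto the Laurent polynomial ring (k[X,Y]/(f−1))[T,T⁻¹] over the quotient ring k[X,Y]/(f−1), such that ψ sends the image of f to the Laurent variable T. (Equivalently, over 𝔾_{m,k} the map f is a trivial fibration with fiber the fiber X₁ of f over 1: X_η ≅ X₁ ×_k 𝔾_{m,k}, compatibly with f.) -/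
/-!
Give `X i` the weight `w i ∈ ℤ` and let `f` be weighted homogeneous of weight `1`; Broughton's
`X(XY - 1)` is one for the weights `(1, -1)`. Then `f (t • x) = t f(x)` for the action
`t • x = (t ^ w i * x i)ᵢ` of `𝔾_m`, so `x ↦ (f(x)⁻¹ • x, f(x))` identifies `{f ≠ 0}` with
`{f = 1} × 𝔾_m`, with inverse `(y, t) ↦ t • y`. On coordinate rings, `X i ↦ T ^ w i * X̄ i`
sends `f` to `T` and hence extends to `k[X][1/f] → (k[X]/(f - 1))[T, T⁻¹]`, while
`X̄ i ↦ f ^ (-w i) * X i`, `T ↦ f` is its inverse.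
-/

open MvPolynomial LaurentPolynomial Localization

theorem Finset.prod_zpow_eq_zpow_sum {G ι : Type*} [CommGroup G] (s : Finset ι) (f : ι → ℤ)
    (a : G) : ∏ i ∈ s, a ^ f i = a ^ ∑ i ∈ s, f i := by
  induction s using Finset.cons_induction with
  | empty => simp
  | cons i s _ ih => simp [Finset.sum_cons, Finset.prod_cons, zpow_add, ih]

namespace LaurentPolynomial

variable {R : Type*} [Semiring R]

noncomputable def unitT : R[T;T⁻¹]ˣ :=
  ⟨T 1, T (-1), by rw [← T_add, add_neg_cancel, T_zero], by rw [← T_add, neg_add_cancel, T_zero]⟩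

theorem val_unitT_zpow (n : ℤ) : ((unitT ^ n : R[T;T⁻¹]ˣ) : R[T;T⁻¹]) = T n := by
  induction n using Int.induction_on with
  | zero => simp [T_zero]
  | succ n ih => rw [zpow_add_one, Units.val_mul, ih, T_add]; rfl
  | pred n ih => rw [zpow_sub_one, Units.val_mul, ih, T_sub]; rfl

end LaurentPolynomial

noncomputable def Localization.awayUnit {R : Type*} [CommSemiring R] (x : R) : (Away x)ˣ :=
  (IsLocalization.Away.algebraMap_isUnit x).unit

namespace MvPolynomial

section WeightedScale

variable {R σ S : Type*} [CommSemiring R] [CommSemiring S] [Algebra R S]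

/-- The `S`-point `g` moved by `t ∈ 𝔾_m(S)` under the action of weight `w`. -/
noncomputable def weightedScale (w : σ → ℤ) (t : Sˣ) (g : MvPolynomial σ R →ₐ[R] S) :
    MvPolynomial σ R →ₐ[R] S :=
  aeval fun i => ((t ^ w i : Sˣ) : S) * g (X i)

variable (w : σ → ℤ) (t : Sˣ) (g : MvPolynomial σ R →ₐ[R] S)

theorem weightedScale_X (i : σ) : weightedScale w t g (X i) = ((t ^ w i : Sˣ) : S) * g (X i) :=
  aeval_X _ _

theorem weightedScale_monomial (d : σ →₀ ℕ) (r : R) :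
    weightedScale w t g (monomial d r) =
      ((t ^ Finsupp.weight w d : Sˣ) : S) * g (monomial d r) := by
  have ht : ((t ^ Finsupp.weight w d : Sˣ) : S) = d.prod fun i k => ((t ^ w i : Sˣ) : S) ^ k := by
    simp only [Finsupp.weight_apply, Finsupp.sum, Finsupp.prod, ← Finset.prod_zpow_eq_zpow_sum,
      Units.coe_prod, ← Units.val_pow_eq_pow_val, ← zpow_natCast, ← zpow_mul, nsmul_eq_mul,
      mul_comm]
  have hg : g (monomial d r) = algebraMap R S r * d.prod fun i k => g (X i) ^ k := by
    conv_lhs => rw [aeval_unique g, aeval_monomial]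
    rfl
  rw [ht, hg, weightedScale, aeval_monomial]
  simp only [mul_pow, Finsupp.prod_mul]
  ring

theorem IsWeightedHomogeneous.weightedScale_apply {p : MvPolynomial σ R} {m : ℤ}
    (hp : p.IsWeightedHomogeneous w m) : weightedScale w t g p = ((t ^ m : Sˣ) : S) * g p := by
  induction hp using IsWeightedHomogeneous.induction_on with
  | zero => simp
  | add p q _ _ hp hq => rw [map_add, map_add, hp, hq, mul_add]
  | monomial d r hd => rw [weightedScale_monomial, hd]

end WeightedScale

section Trivialization

variable {R σ : Type*} [CommRing R] (w : σ → ℤ) (f : MvPolynomial σ R)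

noncomputable def toLaurentFiber :
    MvPolynomial σ R →ₐ[R] (MvPolynomial σ R ⧸ Ideal.span {f - 1})[T;T⁻¹] :=
  weightedScale (S := (MvPolynomial σ R ⧸ Ideal.span {f - 1})[T;T⁻¹]) w unitT
    ((IsScalarTower.toAlgHom R (MvPolynomial σ R ⧸ Ideal.span {f - 1}) _).comp
      (Ideal.Quotient.mkₐ R (Ideal.span {f - 1})))

/-- The pullback along `x ↦ f(x)⁻¹ • x`, which maps `{f ≠ 0}` onto `{f = 1}`. -/
noncomputable def retractToFiber : MvPolynomial σ R →ₐ[R] Localization.Away f :=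
  weightedScale w (awayUnit f)⁻¹ (IsScalarTower.toAlgHom R _ _)

theorem toLaurentFiber_X (i : σ) :
    toLaurentFiber w f (X i) = T (w i) * LaurentPolynomial.C (Ideal.Quotient.mk _ (X i)) := by
  rw [toLaurentFiber, weightedScale_X, val_unitT_zpow]
  rfl

theorem retractToFiber_X (i : σ) :
    retractToFiber w f (X i) = ((awayUnit f ^ w i)⁻¹ : (Localization.Away f)ˣ) *
      algebraMap (MvPolynomial σ R) (Localization.Away f) (X i) := by
  rw [retractToFiber, weightedScale_X, inv_zpow]
  rfl

namespace IsWeightedHomogeneous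

variable {w f} (hf : f.IsWeightedHomogeneous w 1)
include hf

theorem toLaurentFiber_self : toLaurentFiber w f f = T 1 := by
  have hf₁ : Ideal.Quotient.mk (Ideal.span {f - 1}) f = 1 :=
    Ideal.Quotient.eq.mpr (Ideal.mem_span_singleton_self _)
  rw [toLaurentFiber, hf.weightedScale_apply, AlgHom.comp_apply, Ideal.Quotient.mkₐ_eq_mk, hf₁,
    map_one, mul_one, zpow_one]
  rfl

theorem retractToFiber_self : retractToFiber w f f = 1 := by
  rw [retractToFiber, hf.weightedScale_apply, zpow_one]
  exact (awayUnit f).inv_mul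

noncomputable def awayToLaurent :
    Localization.Away f →ₐ[R] (MvPolynomial σ R ⧸ Ideal.span {f - 1})[T;T⁻¹] :=
  IsLocalization.Away.liftAlgHom (P := (MvPolynomial σ R ⧸ Ideal.span {f - 1})[T;T⁻¹]) f
    (f := toLaurentFiber w f)
    (show IsUnit (toLaurentFiber w f f) by rw [hf.toLaurentFiber_self]; exact isUnit_T 1)

noncomputable def fiberToAway : MvPolynomial σ R ⧸ Ideal.span {f - 1} →ₐ[R] Localization.Away f :=
  Ideal.Quotient.liftₐ _ (retractToFiber w f) fun _ ha => by
    obtain ⟨c, rfl⟩ := Ideal.mem_span_singleton'.mp ha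
    rw [map_mul, map_sub, map_one, hf.retractToFiber_self, sub_self, mul_zero]

noncomputable def laurentToAway :
    (MvPolynomial σ R ⧸ Ideal.span {f - 1})[T;T⁻¹] →ₐ[R] Localization.Away f where
  __ := LaurentPolynomial.eval₂ (hf.fiberToAway : MvPolynomial σ R ⧸ Ideal.span {f - 1} →+* _)
    (awayUnit f)
  commutes' r := by simp [LaurentPolynomial.algebraMap_apply]

theorem awayToLaurent_algebraMap (p : MvPolynomial σ R) :
    hf.awayToLaurent (algebraMap _ _ p) = toLaurentFiber w f p :=
  IsLocalization.lift_eq _ _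

theorem awayToLaurent_awayUnit_zpow (n : ℤ) :
    hf.awayToLaurent ((awayUnit f ^ n : (Localization.Away f)ˣ) : Localization.Away f) = T n := by
  have hu : Units.map (hf.awayToLaurent :
      Localization.Away f →* (MvPolynomial σ R ⧸ Ideal.span {f - 1})[T;T⁻¹]) (awayUnit f) = unitT :=
    Units.ext (hf.awayToLaurent_algebraMap f |>.trans hf.toLaurentFiber_self)
  rw [← val_unitT_zpow, ← hu, ← map_zpow]
  rfl

theorem laurentToAway_T (n : ℤ) :
    hf.laurentToAway (T n) = ((awayUnit f ^ n : (Localization.Away f)ˣ) : Localization.Away f) :=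
  eval₂_T _ _ n

theorem laurentToAway_C (b : MvPolynomial σ R ⧸ Ideal.span {f - 1}) :
    hf.laurentToAway (LaurentPolynomial.C b) = hf.fiberToAway b :=
  LaurentPolynomial.eval₂_C _ _ b

theorem fiberToAway_mk (p : MvPolynomial σ R) :
    hf.fiberToAway (Ideal.Quotient.mk _ p) = retractToFiber w f p :=
  rfl

theorem awayToLaurent_retractToFiber (p : MvPolynomial σ R) :
    hf.awayToLaurent (retractToFiber w f p) = LaurentPolynomial.C (Ideal.Quotient.mk _ p) := by
  have h : hf.awayToLaurent.comp (retractToFiber w f) =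
      (IsScalarTower.toAlgHom R _ _).comp (Ideal.Quotient.mkₐ R (Ideal.span {f - 1})) := by
    refine MvPolynomial.algHom_ext fun i => ?_
    show hf.awayToLaurent (retractToFiber w f (X i)) =
      LaurentPolynomial.C (Ideal.Quotient.mk _ (X i))
    rw [retractToFiber_X, map_mul, ← zpow_neg, awayToLaurent_awayUnit_zpow,
      awayToLaurent_algebraMap, toLaurentFiber_X, ← mul_assoc, ← T_add, neg_add_cancel, T_zero,
      one_mul]
  exact AlgHom.congr_fun h p

theorem laurentToAway_comp_awayToLaurent :
    hf.laurentToAway.comp hf.awayToLaurent = AlgHom.id R _ := by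
  apply IsLocalization.algHom_ext (Submonoid.powers f)
  refine MvPolynomial.algHom_ext fun i => ?_
  show hf.laurentToAway (hf.awayToLaurent (algebraMap _ _ (X i))) = algebraMap _ _ (X i)
  rw [awayToLaurent_algebraMap, toLaurentFiber_X, map_mul, laurentToAway_T, laurentToAway_C,
    fiberToAway_mk, retractToFiber_X, Units.mul_inv_cancel_left]

theorem awayToLaurent_comp_laurentToAway :
    hf.awayToLaurent.comp hf.laurentToAway = AlgHom.id R _ := by
  apply AlgHom.coe_ringHom_injective
  apply AddMonoidAlgebra.ringHom_ext
  · intro b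
    obtain ⟨p, rfl⟩ := Ideal.Quotient.mk_surjective b
    exact (congrArg hf.awayToLaurent (hf.laurentToAway_C _)).trans
      (hf.awayToLaurent_retractToFiber p)
  · intro n
    exact (congrArg hf.awayToLaurent (hf.laurentToAway_T n)).trans
      (hf.awayToLaurent_awayUnit_zpow n)

noncomputable def awayEquivLaurent :
    Localization.Away f ≃ₐ[R] (MvPolynomial σ R ⧸ Ideal.span {f - 1})[T;T⁻¹] :=
  AlgEquiv.ofAlgHom hf.awayToLaurent hf.laurentToAway hf.awayToLaurent_comp_laurentToAway
    hf.laurentToAway_comp_awayToLaurent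

theorem awayEquivLaurent_algebraMap_self : hf.awayEquivLaurent (algebraMap _ _ f) = T 1 :=
  (hf.awayToLaurent_algebraMap f).trans hf.toLaurentFiber_self

end IsWeightedHomogeneous

end Trivialization

end MvPolynomial

theorem broughton_isWeightedHomogeneous (k : Type*) [CommRing k] :
    (X 0 * (X 0 * X 1 - 1) : MvPolynomial (Fin 2) k).IsWeightedHomogeneous ![1, -1] 1 := by
  have h0 := isWeightedHomogeneous_X k ![(1 : ℤ), -1] 0
  have h1 := isWeightedHomogeneous_X k ![(1 : ℤ), -1] 1
  simpa using h0.mul ((h0.mul h1).sub (isWeightedHomogeneous_one k _))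

theorem stmt_3_general (k : Type) [Field k] :
    ∃ ψ : Localization.Away (X 0 * (X 0 * X 1 - 1) : MvPolynomial (Fin 2) k) ≃ₐ[k]
        LaurentPolynomial (MvPolynomial (Fin 2) k ⧸
          Ideal.span {(X 0 * (X 0 * X 1 - 1) - 1 : MvPolynomial (Fin 2) k)}),
      ψ (algebraMap (MvPolynomial (Fin 2) k)
          (Localization.Away (X 0 * (X 0 * X 1 - 1) : MvPolynomial (Fin 2) k))
          (X 0 * (X 0 * X 1 - 1))) =
        LaurentPolynomial.T 1 :=
  ⟨_, (broughton_isWeightedHomogeneous k).awayEquivLaurent_algebraMap_self⟩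

/-- Over `𝔾_m` Broughton's map `f = X(XY−1)` is a trivial fibration with fiber the fiber
`X₁` of `f` over `1`: there is a `k`-algebra isomorphism
`k[X,Y][1/f] ≅ (k[X,Y]/(f−1))[T,T⁻¹]` sending the image of `f` to the Laurent variable `T`. -/
theorem stmt_3 (k : Type) [Field k] [CharZero k] :
    ∃ ψ : Localization.Away (X 0 * (X 0 * X 1 - 1) : MvPolynomial (Fin 2) k) ≃ₐ[k]
        LaurentPolynomial (MvPolynomial (Fin 2) k ⧸
          Ideal.span {(X 0 * (X 0 * X 1 - 1) - 1 : MvPolynomial (Fin 2) k)}),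
      ψ (algebraMap (MvPolynomial (Fin 2) k)
          (Localization.Away (X 0 * (X 0 * X 1 - 1) : MvPolynomial (Fin 2) k))
          (X 0 * (X 0 * X 1 - 1))) =
        LaurentPolynomial.T 1 :=
  stmt_3_general k
end

section
/- Let k be a field of characteristic zero and let a ∈ k with a ≠ 0. The ideal of k[X,Y] generated by X·(X·Y−1) − a is a prime ideal, while the ideal generated by X·(X·Y−1) is not prime. (Thus the fibers of Broughton's map over nonzero values are integral, while the fiber over 0 is reducible.) -/
open MvPolynomial

/-!
As a polynomial in `Y`, `X(XY - 1) - a = X² · Y - (X + a)` is linear with coefficients `X²` and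
`X + a`, which are coprime once `a` is a unit (already `X` and `X + a` are); such a linear
polynomial is irreducible, hence prime since `k[X, Y]` is factorial. On the other hand
`X(XY - 1)` divides neither of its two factors: it vanishes at `(1, 1)`, where `X` does not,
and at `(0, 0)`, where `XY - 1` does not.
-/

noncomputable def broughtonPolynomial (R : Type*) [CommRing R] : MvPolynomial (Fin 2) R :=
  X 0 * (X 0 * X 1 - 1)

theorem IsUnit.isCoprime_self_add {R : Type*} [CommRing R] {a : R} (ha : IsUnit a) (t : R) :
    IsCoprime t (t + a) := by
  have hta : IsCoprime t a := by
    simpa using (isCoprime_mul_unit_left_right ha t 1).mpr isCoprime_one_right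
  simpa [add_comm] using hta.add_mul_left_right 1

theorem not_dvd_of_map_eq_zero {A B F : Type*} [CommSemiring A] [Semiring B]
    [FunLike F A B] [RingHomClass F A B] (φ : F) {p q : A} (hp : φ p = 0) (hq : φ q ≠ 0) :
    ¬p ∣ q :=
  fun h => hq (zero_dvd_iff.mp (hp ▸ map_dvd φ h))

theorem Ideal.not_isPrime_span_singleton_mul {A : Type*} [CommSemiring A] {p q : A}
    (hp : ¬p * q ∣ p) (hq : ¬p * q ∣ q) : ¬(Ideal.span {p * q}).IsPrime := fun h => by
  rcases h.mem_or_mem (Ideal.subset_span rfl) with h' | h' <;>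
    rw [Ideal.mem_span_singleton] at h'
  exacts [hp h', hq h']

section BroughtonPolynomial

variable {R : Type*} [CommRing R]

theorem irreducible_broughtonPolynomial_sub_C [IsDomain R] {a : R} (ha : IsUnit a) :
    Irreducible (broughtonPolynomial R - C a) := by
  have linear_in_Y : broughtonPolynomial R - C a = X 0 ^ 2 * X 1 + -(X 0 + C a) := by
    rw [broughtonPolynomial]; ring
  rw [linear_in_Y]
  apply irreducible_mul_X_add
  · exact pow_ne_zero 2 (X_ne_zero 0)
  · intro h
    simpa [vars_X] using vars_pow (X 0 : MvPolynomial (Fin 2) R) 2 h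
  · intro h
    rw [vars_neg] at h
    simpa [vars_X, vars_C] using vars_add_subset _ _ h
  · exact ((ha.map C).isCoprime_self_add (X 0)).pow_left.neg_right.isRelPrime

theorem isPrime_span_broughtonPolynomial_sub_C [IsDomain R] [UniqueFactorizationMonoid R]
    {a : R} (ha : IsUnit a) : (Ideal.span {broughtonPolynomial R - C a}).IsPrime := by
  have hirr := irreducible_broughtonPolynomial_sub_C ha
  exact (Ideal.span_singleton_prime hirr.ne_zero).mpr hirr.prime

theorem not_isPrime_span_broughtonPolynomial [Nontrivial R] :
    ¬(Ideal.span {broughtonPolynomial R}).IsPrime := by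
  apply Ideal.not_isPrime_span_singleton_mul
  · exact not_dvd_of_map_eq_zero (eval fun _ => 1) (by simp) (by simp)
  · exact not_dvd_of_map_eq_zero (eval fun _ => 0) (by simp) (by simp)

end BroughtonPolynomial

theorem stmt_5_general (k : Type) [Field k] (a : k) (ha : a ≠ 0) :
    (Ideal.span {(X 0 * (X 0 * X 1 - 1) - C a : MvPolynomial (Fin 2) k)}).IsPrime ∧
    ¬ (Ideal.span {(X 0 * (X 0 * X 1 - 1) : MvPolynomial (Fin 2) k)}).IsPrime :=
  ⟨isPrime_span_broughtonPolynomial_sub_C ha.isUnit, not_isPrime_span_broughtonPolynomial⟩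

/-- The fibers of Broughton's map `f = X(XY−1)` over nonzero values are integral while the
fiber over `0` is reducible: for `a ≠ 0` the ideal `(f − a)` of `k[X,Y]` is prime, whereas
the ideal `(f)` is not prime. -/
theorem stmt_5 (k : Type) [Field k] [CharZero k] (a : k) (ha : a ≠ 0) :
    (Ideal.span {(X 0 * (X 0 * X 1 - 1) - C a : MvPolynomial (Fin 2) k)}).IsPrime ∧
    ¬ (Ideal.span {(X 0 * (X 0 * X 1 - 1) : MvPolynomial (Fin 2) k)}).IsPrime :=
  stmt_5_general k a ha
end

section
/- Let a ∈ ℂ with a ≠ 0, and let f : ℂ² → ℂ be f(x,y) = x(xy−1). The fibers f⁻¹(0) and f⁻¹(a), with their subspace topologies, are not homeomorphic. (Hence 0 belongs to the topological bifurcation set of Broughton's map, even though f is a smooth morphism.) -/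
/-- For any `a ≠ 0`, the fibers of Broughton's map `f(x,y) = x(xy−1)` over `0` and over `a`
are not homeomorphic; hence `0` belongs to the topological bifurcation set of `f`. -/
theorem stmt_10 (a : ℂ) (ha : a ≠ 0) :
    ¬ Nonempty ({p : ℂ × ℂ // p.1 * (p.1 * p.2 - 1) = 0} ≃ₜ
        {p : ℂ × ℂ // p.1 * (p.1 * p.2 - 1) = a}) := by
  rintro ⟨e⟩
  -- The fiber over `a` is connected: it is the image of the punctured plane
  -- under `x ↦ (x, (a + x) / x ^ 2)`.
  have hdom : ConnectedSpace ({0}ᶜ : Set ℂ) := by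
    have h1 : IsConnected ({0}ᶜ : Set ℂ) :=
      isConnected_compl_singleton_of_one_lt_rank
        (Complex.rank_real_complex ▸ Nat.one_lt_ofNat) 0
    exact Subtype.connectedSpace h1
  have hconn : ConnectedSpace {p : ℂ × ℂ // p.1 * (p.1 * p.2 - 1) = a} := by
    set g : ({0}ᶜ : Set ℂ) → {p : ℂ × ℂ // p.1 * (p.1 * p.2 - 1) = a} := fun x =>
      ⟨(x.1, (a + x.1) / x.1 ^ 2), by
        have hx : (x.1 : ℂ) ≠ 0 := x.2
        field_simp
        ring⟩ with hg
    have hgc : Continuous g := by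
      refine Continuous.subtype_mk ?_ _
      refine Continuous.prodMk continuous_subtype_val ?_
      exact (continuous_const.add continuous_subtype_val).div
        (continuous_subtype_val.pow 2) (fun x => pow_ne_zero 2 x.2)
    have hgs : Function.Surjective g := by
      rintro ⟨⟨x, y⟩, hxy⟩
      have hx : x ≠ 0 := by
        rintro rfl; simp at hxy; exact ha hxy.symm
      refine ⟨⟨x, hx⟩, ?_⟩
      refine Subtype.ext (Prod.ext rfl ?_)
      show ((a + x) / x ^ 2 : ℂ) = y
      field_simp
      linear_combination -hxy
    exact hgs.connectedSpace hgc
  have hconn0 : ConnectedSpace {p : ℂ × ℂ // p.1 * (p.1 * p.2 - 1) = 0} :=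
    e.symm.surjective.connectedSpace e.symm.continuous
  -- But the fiber over `0` is disconnected: `{x = 0}` is a nontrivial clopen subset.
  set U : Set {p : ℂ × ℂ // p.1 * (p.1 * p.2 - 1) = 0} := {p | p.1.1 = 0} with hU
  have hclosed : IsClosed U :=
    isClosed_eq (continuous_fst.comp continuous_subtype_val) continuous_const
  have hcompl : Uᶜ = {p : {p : ℂ × ℂ // p.1 * (p.1 * p.2 - 1) = 0} | p.1.1 * p.1.2 = 1} := by
    ext ⟨⟨x, y⟩, hxy⟩
    simp only [hU, Set.mem_compl_iff, Set.mem_setOf_eq]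
    constructor
    · intro hx
      have := mul_eq_zero.mp hxy
      rcases this with h | h
      · exact absurd h hx
      · exact sub_eq_zero.mp h
    · intro h hx
      rw [hx, zero_mul] at h
      exact one_ne_zero h.symm
  have hopen : IsOpen U := by
    rw [← isClosed_compl_iff, hcompl]
    exact isClosed_eq ((continuous_fst.comp continuous_subtype_val).mul
      (continuous_snd.comp continuous_subtype_val)) continuous_const
  have hclopen : IsClopen U := ⟨hclosed, hopen⟩
  rcases isClopen_iff.mp hclopen with h | h
  · have : (⟨(0, 0), by ring⟩ : {p : ℂ × ℂ // p.1 * (p.1 * p.2 - 1) = 0}) ∈ U := rfl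
    rw [h] at this; exact this
  · have : (⟨(1, 1), by ring⟩ : {p : ℂ × ℂ // p.1 * (p.1 * p.2 - 1) = 0}) ∈ U := by
      rw [h]; trivial
    exact one_ne_zero this
end

section
/- Let f : ℂ² → ℂ be f(x,y) = x(xy−1). The fiber f⁻¹(0) = {(x,y) ∈ ℂ² : x(xy−1) = 0} has exactly two connected components, while for every a ∈ ℂ with a ≠ 0 the fiber f⁻¹(a) = {(x,y) ∈ ℂ² : x(xy−1) = a} is path-connected. (This realizes the Betti number statement b₀(f⁻¹(0)) = 2 and b₀(f⁻¹(a)) = 1 for a ≠ 0.) -/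
/-!
Over `0` the equation `x (x y - 1) = 0` splits into the line `x = 0` and the hyperbola
`x y = 1`: two disjoint closed connected sets, hence the two components of the fiber.
Over `a ≠ 0` the equation forces `x ≠ 0` and `y = (a + x) / x²`, so the fiber is the graph of a
continuous function on the path-connected set `ℂ \ {0}`.
-/

open Set Topology

section Topology

variable {X Y : Type*} [TopologicalSpace X] [TopologicalSpace Y]

theorem IsClopen.connectedComponent_eq {U : Set X} (hU : IsClopen U) (hU' : IsPreconnected U)
    {x : X} (hx : x ∈ U) : connectedComponent x = U :=
  (hU.connectedComponent_subset hx).antisymm (hU'.subset_connectedComponent hx)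

theorem Nat.card_connectedComponents_eq_two_of_isClopen {U : Set X} (hU : IsClopen U)
    (hU₁ : IsConnected U) (hU₂ : IsConnected Uᶜ) : Nat.card (ConnectedComponents X) = 2 := by
  have hin : ∀ z ∈ U, connectedComponent z = U := fun z =>
    hU.connectedComponent_eq hU₁.isPreconnected
  have hout : ∀ z ∉ U, connectedComponent z = Uᶜ := fun z =>
    hU.compl.connectedComponent_eq hU₂.isPreconnected
  obtain ⟨x, hx⟩ := hU₁.nonempty
  obtain ⟨y, hy⟩ := hU₂.nonempty
  rw [Nat.card_eq_two_iff]
  refine ⟨x, y, ?_, eq_univ_of_forall fun c => ?_⟩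
  · rw [ConnectedComponents.coe_ne_coe, hin x hx, hout y hy]
    exact fun h => (h ▸ hx : x ∈ Uᶜ) hx
  · obtain ⟨z, rfl⟩ := ConnectedComponents.surjective_coe c
    simp only [mem_insert_iff, mem_singleton_iff, ConnectedComponents.coe_eq_coe]
    by_cases hz : z ∈ U
    · exact .inl ((hin z hz).trans (hin x hx).symm)
    · exact .inr ((hout z hz).trans (hout y hy).symm)

theorem Nat.card_connectedComponents_union_eq_two {A B : Set Y} (hA : IsClosed A)
    (hB : IsClosed B) (hAB : Disjoint A B) (hA' : IsConnected A) (hB' : IsConnected B) :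
    Nat.card (ConnectedComponents ↥(A ∪ B)) = 2 := by
  have hcompl : (((↑) : ↥(A ∪ B) → Y) ⁻¹' A)ᶜ = (↑) ⁻¹' B := by
    ext ⟨p, hp⟩
    simp only [mem_compl_iff, mem_preimage]
    exact ⟨hp.resolve_left, fun hpB => hAB.notMem_of_mem_right hpB⟩
  have hconn : ∀ C ⊆ A ∪ B, IsConnected C → IsConnected (((↑) : ↥(A ∪ B) → Y) ⁻¹' C) :=
    fun C hC h => h.preimage_of_isClosedMap Subtype.val_injective
      (hA.union hB).isClosedMap_subtype_val (Subtype.range_coe ▸ hC)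
  refine Nat.card_connectedComponents_eq_two_of_isClopen (U := (↑) ⁻¹' A)
    ⟨hA.preimage continuous_subtype_val, ?_⟩ (hconn A subset_union_left hA') ?_
  · rw [← isClosed_compl_iff, hcompl]
    exact hB.preimage continuous_subtype_val
  · rw [hcompl]
    exact hconn B subset_union_right hB'

theorem IsPathConnected.graphOn {s : Set X} (hs : IsPathConnected s) {f : X → Y}
    (hf : ContinuousOn f s) : IsPathConnected (s.graphOn f) :=
  hs.image' (continuousOn_id.prodMk hf)

end Topology

section Algebra

variable {K : Type*} [Field K]

theorem setOf_mul_eq_one_eq_graphOn :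
    {p : K × K | p.1 * p.2 = 1} = ({0}ᶜ : Set K).graphOn (·⁻¹) := by
  ext ⟨x, y⟩
  simp only [mem_ofPred_eq, mem_graphOn, mem_compl_iff, mem_singleton_iff]
  constructor
  · intro h
    exact ⟨left_ne_zero_of_mul_eq_one h, (eq_inv_of_mul_eq_one_right h).symm⟩
  · rintro ⟨hx, rfl⟩
    exact mul_inv_cancel₀ hx

theorem setOf_mul_mul_sub_one_eq_zero_eq_union :
    {p : K × K | p.1 * (p.1 * p.2 - 1) = 0} = {p | p.1 = 0} ∪ {p | p.1 * p.2 = 1} := by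
  ext p
  simp [sub_eq_zero]

theorem setOf_mul_mul_sub_one_eq_graphOn {a : K} (ha : a ≠ 0) :
    {p : K × K | p.1 * (p.1 * p.2 - 1) = a} =
      ({0}ᶜ : Set K).graphOn fun x => (a + x) / x ^ 2 := by
  ext ⟨x, y⟩
  simp only [mem_ofPred_eq, mem_graphOn, mem_compl_iff, mem_singleton_iff]
  constructor
  · intro h
    have hx : x ≠ 0 := by rintro rfl; exact ha (by simpa using h.symm)
    refine ⟨hx, ?_⟩
    field_simp
    linear_combination -h
  · rintro ⟨hx, rfl⟩
    field_simp
    ring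

end Algebra

theorem Complex.isPathConnected_compl_zero : IsPathConnected ({0}ᶜ : Set ℂ) :=
  isPathConnected_compl_singleton_of_one_lt_rank
    (by rw [Complex.rank_real_complex]; exact Cardinal.one_lt_two) 0

/-- Betti numbers in degree 0 for Broughton's map `f(x,y) = x(xy−1)`: the fiber over `0`
has exactly two connected components, while every fiber over a nonzero value is
path-connected. -/
theorem stmt_11 :
    Nat.card (ConnectedComponents {p : ℂ × ℂ // p.1 * (p.1 * p.2 - 1) = 0}) = 2 ∧
    ∀ a : ℂ, a ≠ 0 → PathConnectedSpace {p : ℂ × ℂ // p.1 * (p.1 * p.2 - 1) = a} := by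
  refine ⟨?_, fun a ha => ?_⟩
  · have hline : IsConnected {p : ℂ × ℂ | p.1 = 0} := by
      rw [show {p : ℂ × ℂ | p.1 = 0} = {0} ×ˢ univ by ext; simp]
      exact isConnected_singleton.prod isConnected_univ
    have hhyperbola : IsConnected {p : ℂ × ℂ | p.1 * p.2 = 1} := by
      rw [setOf_mul_eq_one_eq_graphOn]
      exact (Complex.isPathConnected_compl_zero.graphOn continuousOn_inv₀).isConnected
    have hdisj : Disjoint {p : ℂ × ℂ | p.1 = 0} {p | p.1 * p.2 = 1} :=
      disjoint_left.mpr fun p (hp : p.1 = 0) (hq : p.1 * p.2 = 1) => by simp [hp] at hq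
    have h := Nat.card_connectedComponents_union_eq_two (isClosed_eq (by fun_prop) (by fun_prop))
      (isClosed_eq (by fun_prop) (by fun_prop)) hdisj hline hhyperbola
    rwa [← setOf_mul_mul_sub_one_eq_zero_eq_union] at h
  · have h := Complex.isPathConnected_compl_zero.graphOn
      (f := fun x => (a + x) / x ^ 2) (ContinuousOn.div (by fun_prop) (by fun_prop)
        fun x hx => pow_ne_zero 2 hx)
    rw [← setOf_mul_mul_sub_one_eq_graphOn ha] at h
    exact isPathConnected_iff_pathConnectedSpace.mp h
end
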